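/- arXiv:1307.6198 — 4 statements merged into one kernel-verified Lean document; each statement's English description precedes it below -/
import Mathlib

section
/- Let n be a natural number and k a natural number with k ≥ 2. Let M : ℝ → Matrix (Fin n) (Fin n) ℝ be infinitely differentiable (ContDiff ℝ ⊤ M), with M 0 = 1 (the identity matrix) and iteratedDeriv j M 0 = 0 for all j with 1 ≤ j < k. Suppose that for all r in some neighbourhood of 0 the rr-equation holds: trace ((M r)⁻¹ * deriv (deriv M) r) = (1/2) * trace ((M r)⁻¹ * deriv M r * ((M r)⁻¹ * deriv M r)). Then (fun r => (M r).det - 1) = O(|r|^{2k}) as r → 0 (with respect to the filter 𝓝 0). -/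
open Asymptotics Filter Topology Matrix
open scoped ContDiff

attribute [local instance] Matrix.normedAddCommGroup Matrix.normedSpace

noncomputable section DetBigOAux

variable {n : ℕ}

private lemma matrix_norm_mul_le (A B : Matrix (Fin n) (Fin n) ℝ) :
    ‖A * B‖ ≤ (n : ℝ) * ‖A‖ * ‖B‖ := by
  rw [Matrix.norm_le_iff (by positivity)]
  intro i j
  rw [Matrix.mul_apply]
  calc ‖∑ l, A i l * B l j‖ ≤ ∑ l, ‖A i l * B l j‖ := norm_sum_le _ _
    _ ≤ ∑ _l : Fin n, ‖A‖ * ‖B‖ := Finset.sum_le_sum fun l _ => by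
        rw [norm_mul]
        exact mul_le_mul (Matrix.norm_entry_le_entrywise_sup_norm A)
          (Matrix.norm_entry_le_entrywise_sup_norm B) (norm_nonneg _) (norm_nonneg _)
    _ = (n : ℝ) * ‖A‖ * ‖B‖ := by
        simp [Finset.sum_const, Finset.card_univ, mul_assoc]

/-- Matrix multiplication as a continuous bilinear map (entrywise sup norm). -/
private def mulCLM (n : ℕ) :
    Matrix (Fin n) (Fin n) ℝ →L[ℝ] Matrix (Fin n) (Fin n) ℝ →L[ℝ] Matrix (Fin n) (Fin n) ℝ :=
  LinearMap.mkContinuous₂ (LinearMap.mul ℝ (Matrix (Fin n) (Fin n) ℝ)) n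
    (fun A B => matrix_norm_mul_le A B)

@[simp] private lemma mulCLM_apply (A B : Matrix (Fin n) (Fin n) ℝ) :
    mulCLM n A B = A * B := rfl

private lemma HasDerivAt.matMul {f g : ℝ → Matrix (Fin n) (Fin n) ℝ}
    {f' g' : Matrix (Fin n) (Fin n) ℝ} {r : ℝ}
    (hf : HasDerivAt f f' r) (hg : HasDerivAt g g' r) :
    HasDerivAt (fun s => f s * g s) (f' * g r + f r * g') r := by
  letI := Matrix.linftyOpNormedRing (n := Fin n) (α := ℝ)
  letI := Matrix.linftyOpNormedAlgebra (n := Fin n) (R := ℝ) (α := ℝ)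
  exact hf.fun_mul hg

private lemma isBigO_matmul {l : Filter ℝ} {f g : ℝ → Matrix (Fin n) (Fin n) ℝ} {u v : ℝ → ℝ}
    (hf : f =O[l] u) (hg : g =O[l] v) : (fun x => f x * g x) =O[l] fun x => u x * v x := by
  obtain ⟨c1, hc1⟩ := hf.bound
  obtain ⟨c2, hc2⟩ := hg.bound
  refine IsBigO.of_bound ((n : ℝ) * c1 * c2) ?_
  filter_upwards [hc1, hc2] with x h1 h2
  have h3 : ‖f x‖ * ‖g x‖ ≤ (c1 * ‖u x‖) * (c2 * ‖v x‖) :=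
    mul_le_mul h1 h2 (norm_nonneg _) ((norm_nonneg _).trans h1)
  calc ‖f x * g x‖ ≤ (n : ℝ) * ‖f x‖ * ‖g x‖ := matrix_norm_mul_le _ _
    _ = (n : ℝ) * (‖f x‖ * ‖g x‖) := by ring
    _ ≤ (n : ℝ) * ((c1 * ‖u x‖) * (c2 * ‖v x‖)) :=
        mul_le_mul_of_nonneg_left h3 (by positivity)
    _ = (n : ℝ) * c1 * c2 * (‖u x‖ * ‖v x‖) := by ring
    _ = (n : ℝ) * c1 * c2 * ‖u x * v x‖ := by rw [norm_mul]

/-- The trace as a continuous linear map. -/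
private def traceCLM (n : ℕ) : Matrix (Fin n) (Fin n) ℝ →L[ℝ] ℝ :=
  LinearMap.toContinuousLinearMap (Matrix.traceLinearMap (Fin n) ℝ ℝ)

@[simp] private lemma traceCLM_apply (A : Matrix (Fin n) (Fin n) ℝ) :
    traceCLM n A = A.trace := rfl

/-- The determinant as a continuous multilinear map in the rows. -/
private def detCM (n : ℕ) :
    ContinuousMultilinearMap ℝ (fun _ : Fin n => (Fin n → ℝ)) ℝ :=
  MultilinearMap.mkContinuous
    (Matrix.detRowAlternating (R := ℝ) (n := Fin n)).toMultilinearMap (n.factorial)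
    (by
      intro v
      show ‖(Matrix.of v).det‖ ≤ _
      rw [Matrix.det_apply]
      have h2 : ∀ σ : Equiv.Perm (Fin n),
          ‖Equiv.Perm.sign σ • ∏ i, v (σ i) i‖ ≤ ∏ i, ‖v i‖ := by
        intro σ
        have hs : ‖Equiv.Perm.sign σ • ∏ i, v (σ i) i‖ = ‖∏ i, v (σ i) i‖ := by
          rcases Int.units_eq_one_or (Equiv.Perm.sign σ) with h | h <;> simp [h]
        rw [hs]
        calc ‖∏ i, v (σ i) i‖ = ∏ i, ‖v (σ i) i‖ := by
              simp [Real.norm_eq_abs, Finset.abs_prod]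
          _ ≤ ∏ i, ‖v (σ i)‖ :=
              Finset.prod_le_prod (fun i _ => norm_nonneg _)
                (fun i _ => norm_le_pi_norm (v (σ i)) i)
          _ = ∏ i, ‖v i‖ := Equiv.prod_comp σ (fun i => ‖v i‖)
      calc ‖∑ σ : Equiv.Perm (Fin n), Equiv.Perm.sign σ • ∏ i, (Matrix.of v) (σ i) i‖
          ≤ ∑ σ : Equiv.Perm (Fin n), ‖Equiv.Perm.sign σ • ∏ i, v (σ i) i‖ := norm_sum_le _ _
        _ ≤ ∑ _σ : Equiv.Perm (Fin n), ∏ i, ‖v i‖ := Finset.sum_le_sum fun σ _ => h2 σ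
        _ = (n.factorial : ℝ) * ∏ i, ‖v i‖ := by
            simp [Finset.sum_const, Finset.card_univ, Fintype.card_perm])

private lemma detCM_apply (A : Matrix (Fin n) (Fin n) ℝ) : detCM n A = A.det := rfl

/-- The sum of determinants with one row replaced equals a trace against the adjugate. -/
private lemma sum_det_updateRow (A B : Matrix (Fin n) (Fin n) ℝ) :
    ∑ i, (A.updateRow i (B i)).det = (Matrix.adjugate A * B).trace := by
  have key : ∀ i, (A.updateRow i (B i)).det = ∑ j, B i j * Matrix.adjugate A j i := by
    intro i
    have hB : B i = ∑ j, B i j • (Pi.single j 1 : Fin n → ℝ) := by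
      funext l
      simp [Pi.single_apply]
    have h1 : (A.updateRow i (B i)).det = Matrix.cramer Aᵀ (B i) i := by
      rw [Matrix.cramer_apply, Matrix.updateCol_transpose, Matrix.det_transpose]
    have h2 : Matrix.cramer Aᵀ (B i) = ∑ j, B i j • Matrix.cramer Aᵀ (Pi.single j 1) := by
      conv_lhs => rw [hB]
      rw [map_sum]
      simp only [_root_.map_smul]
    rw [h1, h2, Finset.sum_apply]
    refine Finset.sum_congr rfl fun j _ => ?_
    have hadj : Matrix.adjugate A j i = Matrix.cramer Aᵀ (Pi.single j 1) i := by
      rw [Matrix.adjugate_def]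
      rfl
    rw [hadj]
    simp [smul_eq_mul]
  rw [Matrix.trace]
  simp only [Matrix.diag, Matrix.mul_apply, key]
  rw [Finset.sum_comm]
  exact Finset.sum_congr rfl fun i _ => Finset.sum_congr rfl fun j _ => mul_comm _ _

/-- Jacobi's formula, composed with a curve. -/
private lemma hasDerivAt_det {M : ℝ → Matrix (Fin n) (Fin n) ℝ}
    {M' : Matrix (Fin n) (Fin n) ℝ} {r : ℝ} (h : HasDerivAt M M' r) :
    HasDerivAt (fun s => (M s).det) ((Matrix.adjugate (M r) * M').trace) r := by
  have h1 : HasFDerivAt (detCM n) ((detCM n).linearDeriv (M r)) (M r) :=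
    (detCM n).hasFDerivAt (M r)
  have h2 := h1.comp_hasDerivAt r h
  have h3 : (detCM n).linearDeriv (M r) M' = (Matrix.adjugate (M r) * M').trace := by
    erw [ContinuousMultilinearMap.linearDeriv_apply, ← sum_det_updateRow]
    exact Finset.sum_congr rfl fun i _ => rfl
  rw [← h3]
  exact h2

variable {F : Type*} [NormedAddCommGroup F] [NormedSpace ℝ F]

/-- Integrating a big-O bound on the derivative. -/
private lemma isBigO_of_hasDerivAt_isBigO {f g : ℝ → F} {m : ℕ}
    (hf : ∀ᶠ r in 𝓝 (0 : ℝ), HasDerivAt f (g r) r) (h0 : f 0 = 0)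
    (hg : g =O[𝓝 0] fun r : ℝ => |r| ^ m) :
    f =O[𝓝 0] fun r : ℝ => |r| ^ (m + 1) := by
  obtain ⟨C, hC⟩ := hg.bound
  set C' := max C 0 with hC'
  have hC'0 : 0 ≤ C' := le_max_right _ _
  have hC2 : ∀ᶠ r in 𝓝 (0 : ℝ), ‖g r‖ ≤ C' * ‖|r| ^ m‖ := by
    filter_upwards [hC] with r hr
    exact hr.trans (by gcongr; exact le_max_left _ _)
  obtain ⟨ε, hε, hball⟩ := Metric.eventually_nhds_iff.mp (hf.and hC2)
  refine IsBigO.of_bound C' ?_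
  have hev : ∀ᶠ r : ℝ in 𝓝 0, dist r 0 < ε := Metric.ball_mem_nhds 0 hε
  filter_upwards [hev] with r hr
  have habs : ∀ t ∈ Set.uIcc (0 : ℝ) r, |t| ≤ |r| := by
    intro t ht
    rcases Set.mem_uIcc.mp ht with ⟨h1, h2⟩ | ⟨h1, h2⟩ <;>
      · rw [abs_le]
        constructor <;> nlinarith [le_abs_self r, neg_abs_le r]
  have key : ∀ t ∈ Set.uIcc (0 : ℝ) r,
      HasDerivAt f (g t) t ∧ ‖g t‖ ≤ C' * |r| ^ m := by
    intro t ht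
    have h2 : dist t 0 < ε := by
      rw [Real.dist_eq, sub_zero]
      rw [Real.dist_eq, sub_zero] at hr
      exact lt_of_le_of_lt (habs t ht) hr
    obtain ⟨hd, hb⟩ := hball h2
    refine ⟨hd, hb.trans ?_⟩
    have : ‖|t| ^ m‖ = |t| ^ m := by
      rw [Real.norm_eq_abs, abs_of_nonneg (by positivity)]
    rw [this]
    exact mul_le_mul_of_nonneg_left (pow_le_pow_left₀ (abs_nonneg t) (habs t ht) m) hC'0
  have := Convex.norm_image_sub_le_of_norm_hasDerivWithin_le
    (f := f) (f' := g) (s := Set.uIcc (0 : ℝ) r)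
    (fun t ht => (key t ht).1.hasDerivWithinAt)
    (fun t ht => (key t ht).2)
    (convex_uIcc 0 r) Set.left_mem_uIcc Set.right_mem_uIcc
  rw [h0, sub_zero, sub_zero] at this
  calc ‖f r‖ ≤ C' * |r| ^ m * ‖r‖ := this
    _ = C' * |r| ^ (m + 1) := by rw [Real.norm_eq_abs]; ring
    _ = C' * ‖|r| ^ (m + 1)‖ := by
        rw [Real.norm_eq_abs, abs_of_nonneg (pow_nonneg (abs_nonneg r) (m + 1))]

/-- A smooth function whose derivatives vanish at `0` up to order `m` is `O(|r|^m)`. -/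
private lemma isBigO_of_iteratedDeriv_eq_zero :
    ∀ (m : ℕ) (f : ℝ → F), ContDiff ℝ ∞ f → (∀ j < m, iteratedDeriv j f 0 = 0) →
      f =O[𝓝 0] fun r : ℝ => |r| ^ m := by
  intro m
  induction m with
  | zero =>
    intro f hf _
    simpa using hf.continuous.continuousAt.isBigO_one ℝ
  | succ m ih =>
    intro f hf h
    have h0 : f 0 = 0 := by
      have := h 0 (Nat.succ_pos m)
      rwa [iteratedDeriv_zero] at this
    have hf' := (contDiff_infty_iff_deriv.mp hf).2
    have hder : ∀ j < m, iteratedDeriv j (deriv f) 0 = 0 := by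
      intro j hj
      rw [← iteratedDeriv_succ']
      exact h (j + 1) (by omega)
    exact isBigO_of_hasDerivAt_isBigO
      (Filter.Eventually.of_forall fun r => ((hf.differentiable (by simp)) r).hasDerivAt)
      h0 (ih (deriv f) hf' hder)

end DetBigOAux

theorem det_sub_one_isBigO_of_rr_equation
    (n k : ℕ) (hk : 2 ≤ k) (M : ℝ → Matrix (Fin n) (Fin n) ℝ)
    (hM : ContDiff ℝ (⊤ : ℕ∞) M) (hM0 : M 0 = 1)
    (hMj : ∀ j : ℕ, 1 ≤ j → j < k → iteratedDeriv j M 0 = 0)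
    (hrr : ∀ᶠ r in 𝓝 (0 : ℝ),
      ((M r)⁻¹ * deriv (deriv M) r).trace =
        (1 / 2) * ((M r)⁻¹ * deriv M r * ((M r)⁻¹ * deriv M r)).trace) :
    (fun r : ℝ => (M r).det - 1) =O[𝓝 0] (fun r : ℝ => |r| ^ (2 * k)) := by
  obtain ⟨m, hm1, rfl⟩ : ∃ m : ℕ, 1 ≤ m ∧ k = m + 1 := ⟨k - 1, by omega, by omega⟩
  have hMs : ContDiff ℝ ∞ M := hM.of_le (by simp)
  have h1le : (1 : WithTop ℕ∞) ≤ ∞ := mod_cast le_top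
  have hMdiff : ∀ r, HasDerivAt M (deriv M r) r :=
    fun r => ((hMs.differentiable (by simp)) r).hasDerivAt
  have hM' : ContDiff ℝ ∞ (deriv M) := (contDiff_infty_iff_deriv.mp hMs).2
  have hM'diff : ∀ r, HasDerivAt (deriv M) (deriv (deriv M) r) r :=
    fun r => ((hM'.differentiable (by simp)) r).hasDerivAt
  have hDet : ContDiff ℝ ∞ (fun s => (M s).det) := ((detCM n).contDiff).comp hMs
  have hDne : ∀ᶠ r in 𝓝 (0 : ℝ), (M r).det ≠ 0 := by
    have hcont : ContinuousAt (fun s => (M s).det) 0 := hDet.continuous.continuousAt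
    have hmem : {x : ℝ | x ≠ 0} ∈ 𝓝 ((fun s => (M s).det) 0) := by
      have : (M 0).det = 1 := by rw [hM0, Matrix.det_one]
      simp only [this]
      exact isOpen_ne.mem_nhds one_ne_zero
    exact hcont hmem
  have hAdj : ContDiff ℝ ∞ (fun r => Matrix.adjugate (M r)) := by
    apply contDiff_pi.2
    intro i
    apply contDiff_pi.2
    intro j
    have hrow : ContDiff ℝ ∞ (fun r => Matrix.updateRow (M r) j (Pi.single i (1 : ℝ))) := by
      apply contDiff_pi.2
      intro a
      apply contDiff_pi.2
      intro b
      by_cases haj : a = j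
      · simp only [Matrix.updateRow_apply, if_pos haj]
        exact contDiff_const
      · simp only [Matrix.updateRow_apply, if_neg haj]
        exact (contDiff_pi.1 (contDiff_pi.1 hMs a)) b
    have heq : (fun r => Matrix.adjugate (M r) i j)
        = fun r => (Matrix.updateRow (M r) j (Pi.single i 1)).det := by
      funext r
      rw [Matrix.adjugate_apply]
    rw [heq]
    exact ((detCM n).contDiff).comp hrow
  have hNeq : ∀ r, (M r)⁻¹ = ((M r).det)⁻¹ • Matrix.adjugate (M r) := fun r => by
    rw [Matrix.inv_def, Ring.inverse_eq_inv']
  have hNcont : ContinuousAt (fun r => (M r)⁻¹) 0 := by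
    have heq : (fun r => (M r)⁻¹) = fun r => ((M r).det)⁻¹ • Matrix.adjugate (M r) :=
      funext hNeq
    rw [heq]
    refine ContinuousAt.smul (ContinuousAt.inv₀ hDet.continuous.continuousAt ?_)
      hAdj.continuous.continuousAt
    rw [hM0, Matrix.det_one]
    exact one_ne_zero
  have hNO : (fun r => (M r)⁻¹) =O[𝓝 (0 : ℝ)] (fun _ => (1 : ℝ)) :=
    Filter.Tendsto.isBigO_one ℝ hNcont
  have hM'O : (deriv M) =O[𝓝 (0 : ℝ)] fun r => |r| ^ m := by
    refine isBigO_of_iteratedDeriv_eq_zero m (deriv M) hM' ?_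
    intro j hj
    have := hMj (j + 1) (by omega) (by omega)
    rwa [iteratedDeriv_succ'] at this
  have hQO : (fun r => (M r)⁻¹ * deriv M r) =O[𝓝 (0 : ℝ)] fun r => |r| ^ m := by
    have := isBigO_matmul hNO hM'O
    simpa using this
  have hQQO : (fun r => ((M r)⁻¹ * deriv M r) * ((M r)⁻¹ * deriv M r)) =O[𝓝 (0 : ℝ)]
      fun r => |r| ^ (m + m) := by
    have := isBigO_matmul hQO hQO
    simpa [← pow_add] using this
  have htrO : (fun r => -(1 / 2 : ℝ) * (((M r)⁻¹ * deriv M r) * ((M r)⁻¹ * deriv M r)).trace)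
      =O[𝓝 (0 : ℝ)] fun r => |r| ^ (m + m) := by
    have h1 : (fun r => (traceCLM n) (((M r)⁻¹ * deriv M r) * ((M r)⁻¹ * deriv M r)))
        =O[𝓝 (0 : ℝ)] fun r => |r| ^ (m + m) :=
      ((traceCLM n).isBigO_comp _ _).trans hQQO
    exact h1.const_mul_left _
  have hNdiff : ∀ᶠ r in 𝓝 (0 : ℝ), DifferentiableAt ℝ (fun s => (M s)⁻¹) r := by
    filter_upwards [hDne] with r hne
    have heq : (fun s => (M s)⁻¹) = fun s => ((M s).det)⁻¹ • Matrix.adjugate (M s) :=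
      funext hNeq
    rw [heq]
    exact ((hDet.differentiable (by simp) r).inv hne).smul (hAdj.differentiable (by simp) r)
  have hN' : ∀ᶠ r in 𝓝 (0 : ℝ), HasDerivAt (fun s => (M s)⁻¹)
      (-((M r)⁻¹ * deriv M r * (M r)⁻¹)) r := by
    filter_upwards [hNdiff, hDne.eventually_nhds, hDne] with r hdiff hev hne
    have hNd : HasDerivAt (fun s => (M s)⁻¹) (deriv (fun s => (M s)⁻¹) r) r :=
      hdiff.hasDerivAt
    have hMN : (fun s => M s * (M s)⁻¹) =ᶠ[𝓝 r] fun _ => (1 : Matrix (Fin n) (Fin n) ℝ) := by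
      filter_upwards [hev] with s hs
      exact Matrix.mul_nonsing_inv _ (isUnit_iff_ne_zero.mpr hs)
    have h1 : HasDerivAt (fun s => M s * (M s)⁻¹)
        (deriv M r * (M r)⁻¹ + M r * deriv (fun s => (M s)⁻¹) r) r :=
      (hMdiff r).matMul hNd
    have h2 : HasDerivAt (fun s => M s * (M s)⁻¹) 0 r :=
      (hasDerivAt_const r (1 : Matrix (Fin n) (Fin n) ℝ)).congr_of_eventuallyEq hMN
    have h3 : deriv M r * (M r)⁻¹ + M r * deriv (fun s => (M s)⁻¹) r = 0 := h1.unique h2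
    have hNM : (M r)⁻¹ * M r = 1 := Matrix.nonsing_inv_mul _ (isUnit_iff_ne_zero.mpr hne)
    have h4 : (M r)⁻¹ * (deriv M r * (M r)⁻¹ + M r * deriv (fun s => (M s)⁻¹) r) = 0 := by
      rw [h3, mul_zero]
    rw [mul_add, ← mul_assoc, ← mul_assoc, hNM, one_mul] at h4
    have h5 := eq_neg_of_add_eq_zero_right h4
    exact h5 ▸ hNd
  have hu' : ∀ᶠ r in 𝓝 (0 : ℝ), HasDerivAt (fun s => ((M s)⁻¹ * deriv M s).trace)
      (-(1 / 2 : ℝ) * (((M r)⁻¹ * deriv M r) * ((M r)⁻¹ * deriv M r)).trace) r := by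
    filter_upwards [hN', hrr] with r hNr hrrr
    have h1 : HasDerivAt (fun s => (M s)⁻¹ * deriv M s)
        (-((M r)⁻¹ * deriv M r * (M r)⁻¹) * deriv M r + (M r)⁻¹ * deriv (deriv M) r) r :=
      hNr.matMul (hM'diff r)
    have h2 := (traceCLM n).hasFDerivAt.comp_hasDerivAt r h1
    have h2' : HasDerivAt (fun s => ((M s)⁻¹ * deriv M s).trace)
        ((-((M r)⁻¹ * deriv M r * (M r)⁻¹) * deriv M r
          + (M r)⁻¹ * deriv (deriv M) r).trace) r := h2
    have e1 : -((M r)⁻¹ * deriv M r * (M r)⁻¹) * deriv M r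
        = -(((M r)⁻¹ * deriv M r) * ((M r)⁻¹ * deriv M r)) := by
      rw [neg_mul, mul_assoc ((M r)⁻¹ * deriv M r)]
    rw [e1, Matrix.trace_add, Matrix.trace_neg, hrrr] at h2'
    have e2 : -((((M r)⁻¹ * deriv M r) * ((M r)⁻¹ * deriv M r)).trace)
        + 1 / 2 * ((((M r)⁻¹ * deriv M r) * ((M r)⁻¹ * deriv M r)).trace)
        = -(1 / 2 : ℝ) * (((M r)⁻¹ * deriv M r) * ((M r)⁻¹ * deriv M r)).trace := by
      ring
    rw [e2] at h2'
    exact h2'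
  have hu0 : ((M 0)⁻¹ * deriv M 0).trace = 0 := by
    have hd1 : deriv M 0 = 0 := by
      have := hMj 1 le_rfl (by omega)
      rwa [iteratedDeriv_one] at this
    rw [hd1, mul_zero, Matrix.trace_zero]
  have huO : (fun r => ((M r)⁻¹ * deriv M r).trace) =O[𝓝 (0 : ℝ)]
      fun r => |r| ^ (m + m + 1) :=
    isBigO_of_hasDerivAt_isBigO hu' hu0 htrO
  have hDud : (fun r => (Matrix.adjugate (M r) * deriv M r).trace)
      =ᶠ[𝓝 (0 : ℝ)] fun r => (M r).det * ((M r)⁻¹ * deriv M r).trace := by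
    filter_upwards [hDne] with r hne
    have hadj : Matrix.adjugate (M r) = (M r).det • (M r)⁻¹ := by
      rw [hNeq r, smul_smul, mul_inv_cancel₀ hne, one_smul]
    rw [hadj, Matrix.smul_mul, Matrix.trace_smul, smul_eq_mul]
  have hDO : (fun r => (M r).det) =O[𝓝 (0 : ℝ)] (fun _ => (1 : ℝ)) :=
    Filter.Tendsto.isBigO_one ℝ hDet.continuous.continuousAt
  have hDuO : (fun r => (M r).det * ((M r)⁻¹ * deriv M r).trace) =O[𝓝 (0 : ℝ)]
      fun r => |r| ^ (m + m + 1) := by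
    have := hDO.mul huO
    simpa using this
  have hgO : (fun r => (Matrix.adjugate (M r) * deriv M r).trace) =O[𝓝 (0 : ℝ)]
      fun r => |r| ^ (m + m + 1) := hDud.trans_isBigO hDuO
  have hfinal : (fun r : ℝ => (M r).det - 1) =O[𝓝 (0 : ℝ)]
      fun r => |r| ^ (m + m + 1 + 1) :=
    isBigO_of_hasDerivAt_isBigO
      (Filter.Eventually.of_forall fun r => (hasDerivAt_det (hMdiff r)).sub_const 1)
      (by rw [hM0, Matrix.det_one, sub_self]) hgO
  have hexp : 2 * (m + 1) = m + m + 1 + 1 := by ring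
  rw [hexp]
  exact hfinal
end

section
/- Let δ > 0 and let f : ℝ → ℝ be twice continuously differentiable on the open interval (0, δ) with f r > 0 for all r ∈ (0, δ). If f satisfies the differential equation 2 * f r * deriv (deriv f) r = (deriv f r)^2 for all r ∈ (0, δ), then there exist real constants a and b such that f r = (a + b * r)^2 for all r ∈ (0, δ). -/
/-!
Positivity makes `√f` a `C²` function, and the equation `2 f f'' = f'²` says precisely that
`(√f)'' = (f' / (2√f))' = (2 f f'' - f'²) / (4 f √f)` vanishes. So `√f` is affine on the interval,
and `f` is its square.
-/

open Set

theorem IsOpen.exists_eq_const_add_mul_of_hasDerivAt {𝕜 : Type*} [RCLike 𝕜] {s : Set 𝕜}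
    (hs : IsOpen s) (hs' : IsPreconnected s) {g : 𝕜 → 𝕜} {b : 𝕜}
    (hg : ∀ x ∈ s, HasDerivAt g b x) : ∃ a, ∀ x ∈ s, g x = a + b * x := by
  have hlin : ∀ x, HasDerivAt (fun x => b * x) b x := fun x => by
    simpa using (hasDerivAt_id x).const_mul b
  obtain ⟨a, ha⟩ := hs.exists_eq_add_of_deriv_eq hs'
    (fun x hx => (hg x hx).differentiableAt.differentiableWithinAt)
    (fun x _ => (hlin x).differentiableAt.differentiableWithinAt)
    (fun x hx => (hg x hx).deriv.trans (hlin x).deriv.symm)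
  exact ⟨a, fun x hx => (ha hx).trans (add_comm _ _)⟩

theorem hasDerivAt_div_two_sqrt_eq_zero {f f' : ℝ → ℝ} {f'' x : ℝ}
    (hf : HasDerivAt f (f' x) x) (hf' : HasDerivAt f' f'' x) (hx : 0 < f x)
    (hode : 2 * f x * f'' = f' x ^ 2) :
    HasDerivAt (fun r => f' r / (2 * √(f r))) 0 x := by
  have hsqrt : 0 < √(f x) := Real.sqrt_pos.2 hx
  have hdiv := hf'.div ((hf.sqrt hx.ne').const_mul 2) (by positivity)
  refine hdiv.congr_deriv ?_
  field_simp
  rw [Real.sq_sqrt hx.le]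
  linarith

theorem ode_two_f_f''_eq_f'_sq_general
    (δ : ℝ) (f : ℝ → ℝ)
    (hf : ContDiffOn ℝ 2 f (Ioo 0 δ))
    (hpos : ∀ r ∈ Ioo 0 δ, 0 < f r)
    (hode : ∀ r ∈ Ioo 0 δ, 2 * f r * deriv (deriv f) r = (deriv f r) ^ 2) :
    ∃ a b : ℝ, ∀ r ∈ Ioo 0 δ, f r = (a + b * r) ^ 2 := by
  have hf' : ∀ r ∈ Ioo 0 δ, HasDerivAt f (deriv f r) r := fun r hr =>
    ((hf.differentiableOn two_ne_zero).differentiableAt (isOpen_Ioo.mem_nhds hr)).hasDerivAt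
  have hf'' : ∀ r ∈ Ioo 0 δ, HasDerivAt (deriv f) (deriv (deriv f) r) r := fun r hr =>
    (((hf.deriv_of_isOpen isOpen_Ioo le_rfl).differentiableOn one_ne_zero).differentiableAt
      (isOpen_Ioo.mem_nhds hr)).hasDerivAt
  obtain ⟨b, hb⟩ := isOpen_Ioo.exists_eq_const_add_mul_of_hasDerivAt isPreconnected_Ioo
    fun r hr => hasDerivAt_div_two_sqrt_eq_zero (hf' r hr) (hf'' r hr) (hpos r hr) (hode r hr)
  obtain ⟨a, ha⟩ := isOpen_Ioo.exists_eq_const_add_mul_of_hasDerivAt isPreconnected_Ioo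
    (g := fun r => √(f r)) (b := b) fun r hr => by
      simpa [hb r hr] using (hf' r hr).sqrt (hpos r hr).ne'
  exact ⟨a, b, fun r hr => by rw [← ha r hr, Real.sq_sqrt (hpos r hr).le]⟩

theorem ode_two_f_f''_eq_f'_sq
    (δ : ℝ) (hδ : 0 < δ) (f : ℝ → ℝ)
    (hf : ContDiffOn ℝ 2 f (Ioo 0 δ))
    (hpos : ∀ r ∈ Ioo 0 δ, 0 < f r)
    (hode : ∀ r ∈ Ioo 0 δ, 2 * f r * deriv (deriv f) r = (deriv f r) ^ 2) :
    ∃ a b : ℝ, ∀ r ∈ Ioo 0 δ, f r = (a + b * r) ^ 2 :=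
  ode_two_f_f''_eq_f'_sq_general δ f hf hpos hode
end

section
/- Let δ > 0 and let f : ℝ → ℝ be twice continuously differentiable on the open interval (0, δ) with f r > 0 for all r ∈ (0, δ), satisfying 2 * f r * deriv (deriv f) r = (deriv f r)^2 for all r ∈ (0, δ). If moreover f r → 1 and deriv f r → 0 as r → 0⁺ (limits along the filter 𝓝[>] 0), then f r = 1 for all r ∈ (0, δ). -/
/-!
The equation `2 f f'' = f'²` says exactly that `(f' / √f)' = 0`, so `f' / √f` is constant on
`(0, δ)`; its limit `0 / √1 = 0` at `0⁺` makes it vanish. Hence `f` is constant, and its limit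
at `0⁺` makes it `1`.
-/

open Set Filter Topology

theorem eq_of_hasDerivAt_zero_of_tendsto_nhdsGT {g : ℝ → ℝ} {a b L : ℝ}
    (hg : ∀ x ∈ Ioo a b, HasDerivAt g 0 x) (hlim : Tendsto g (𝓝[>] a) (𝓝 L)) :
    ∀ x ∈ Ioo a b, g x = L := by
  obtain ⟨c, hc⟩ := isOpen_Ioo.exists_is_const_of_deriv_eq_zero isPreconnected_Ioo
    (fun x hx => (hg x hx).differentiableAt.differentiableWithinAt) (fun x hx => (hg x hx).deriv)
  intro x hx
  have hc_lim : Tendsto g (𝓝[>] a) (𝓝 c) :=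
    tendsto_const_nhds.congr' <|
      eventually_of_mem (Ioo_mem_nhdsGT (hx.1.trans hx.2)) fun y hy => (hc y hy).symm
  rw [hc x hx, tendsto_nhds_unique hc_lim hlim]

theorem hasDerivAt_div_sqrt_eq_zero_of_two_mul_eq_sq {f f₁ : ℝ → ℝ} {f₂ x : ℝ}
    (hf : HasDerivAt f (f₁ x) x) (hf₁ : HasDerivAt f₁ f₂ x) (hpos : 0 < f x)
    (hode : 2 * f x * f₂ = f₁ x ^ 2) :
    HasDerivAt (fun y => f₁ y / √(f y)) 0 x := by
  have hsqrt : 0 < √(f x) := Real.sqrt_pos.2 hpos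
  refine (hf₁.fun_div (hf.sqrt hpos.ne') hsqrt.ne').congr_deriv ?_
  field_simp
  rw [Real.sq_sqrt hpos.le]
  linarith

theorem ode_with_boundary_conditions_implies_constant_one_general
    (δ : ℝ) (f : ℝ → ℝ)
    (hf : ContDiffOn ℝ 2 f (Ioo 0 δ))
    (hpos : ∀ r ∈ Ioo 0 δ, 0 < f r)
    (hode : ∀ r ∈ Ioo 0 δ, 2 * f r * deriv (deriv f) r = (deriv f r) ^ 2)
    (hf1 : Tendsto f (𝓝[>] 0) (𝓝 1))
    (hf'0 : Tendsto (deriv f) (𝓝[>] 0) (𝓝 0)) :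
    ∀ r ∈ Ioo 0 δ, f r = 1 := by
  have hd₁ : ∀ r ∈ Ioo 0 δ, HasDerivAt f (deriv f r) r := fun r hr =>
    ((hf.differentiableOn (by norm_num)).differentiableAt (isOpen_Ioo.mem_nhds hr)).hasDerivAt
  have hf' : ContDiffOn ℝ 1 (deriv f) (Ioo 0 δ) := hf.deriv_of_isOpen isOpen_Ioo (by norm_num)
  have hd₂ : ∀ r ∈ Ioo 0 δ, HasDerivAt (deriv f) (deriv (deriv f) r) r := fun r hr =>
    ((hf'.differentiableOn one_ne_zero).differentiableAt (isOpen_Ioo.mem_nhds hr)).hasDerivAt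
  have hquot : ∀ r ∈ Ioo 0 δ, deriv f r / √(f r) = 0 :=
    eq_of_hasDerivAt_zero_of_tendsto_nhdsGT
      (fun r hr => hasDerivAt_div_sqrt_eq_zero_of_two_mul_eq_sq (hd₁ r hr) (hd₂ r hr)
        (hpos r hr) (hode r hr))
      (by simpa [Pi.div_def] using hf'0.div hf1.sqrt (by norm_num))
  have hderiv : ∀ r ∈ Ioo 0 δ, deriv f r = 0 := fun r hr => by
    simpa [(Real.sqrt_pos.2 (hpos r hr)).ne'] using hquot r hr
  exact eq_of_hasDerivAt_zero_of_tendsto_nhdsGT (fun r hr => hderiv r hr ▸ hd₁ r hr) hf1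

theorem ode_with_boundary_conditions_implies_constant_one
    (δ : ℝ) (hδ : 0 < δ) (f : ℝ → ℝ)
    (hf : ContDiffOn ℝ 2 f (Ioo 0 δ))
    (hpos : ∀ r ∈ Ioo 0 δ, 0 < f r)
    (hode : ∀ r ∈ Ioo 0 δ, 2 * f r * deriv (deriv f) r = (deriv f r) ^ 2)
    (hf1 : Tendsto f (𝓝[>] 0) (𝓝 1))
    (hf'0 : Tendsto (deriv f) (𝓝[>] 0) (𝓝 0)) :
    ∀ r ∈ Ioo 0 δ, f r = 1 :=
  ode_with_boundary_conditions_implies_constant_one_general δ f hf hpos hode hf1 hf'0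
end

section
/- Let n be a natural number with n ≥ 1, let S be an n×n real matrix with IsUnit S.det, let f : ℝ → ℝ be twice continuously differentiable on a neighbourhood of r₀ ∈ ℝ with f r₀ ≠ 0, and define M : ℝ → Matrix (Fin n) (Fin n) ℝ by M r = (f r) • S. Then the rr-equation trace ((M r₀)⁻¹ * deriv (deriv M) r₀) = (1/2) * trace ((M r₀)⁻¹ * deriv M r₀ * ((M r₀)⁻¹ * deriv M r₀)) holds if and only if 2 * f r₀ * deriv (deriv f) r₀ = (deriv f r₀)^2. -/
/-!
For `M = f • S` with `S` invertible, every derivative of `M` is the same derivative of `f` times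
`S`, so `M⁻¹ M' = (f'/f) • 1` and `M⁻¹ M'' = (f''/f) • 1`. The rr-equation then reads
`n f''/f = n (f'/f)² / 2`, which is the scalar ODE after clearing `n` and `f`.
The identity `deriv (f • S) = deriv f • S` holds for every `f`: a functional taking the value
`1` at `S` recovers `f` from `f • S`, so where `f` is not differentiable neither is `f • S`, and
both sides are junk zeros.
-/

open Matrix

attribute [local instance] Matrix.normedAddCommGroup Matrix.normedSpace

section DerivSmulConst

variable {𝕜 F : Type*} [NontriviallyNormedField 𝕜] [NormedAddCommGroup F] [NormedSpace 𝕜 F]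
  [SeparatingDual 𝕜 F]

theorem differentiableAt_smul_const_iff {c : 𝕜 → 𝕜} {x : 𝕜} {v : F} (hv : v ≠ 0) :
    DifferentiableAt 𝕜 (fun y => c y • v) x ↔ DifferentiableAt 𝕜 c x := by
  refine ⟨fun h => ?_, fun h => h.smul_const v⟩
  obtain ⟨φ, hφ⟩ := SeparatingDual.exists_eq_one (R := 𝕜) hv
  have hc : c = fun y => φ (c y • v) := funext fun y => by rw [map_smul, hφ, smul_eq_mul, mul_one]
  rw [hc]
  exact φ.differentiableAt.comp x h

theorem deriv_smul_const_of_ne_zero (c : 𝕜 → 𝕜) {v : F} (hv : v ≠ 0) :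
    deriv (fun y => c y • v) = fun x => deriv c x • v := by
  funext x
  by_cases hc : DifferentiableAt 𝕜 c x
  · exact deriv_smul_const hc v
  · have hcv : ¬DifferentiableAt 𝕜 (fun y => c y • v) x :=
      (differentiableAt_smul_const_iff hv).not.mpr hc
    rw [deriv_zero_of_not_differentiableAt hc, deriv_zero_of_not_differentiableAt hcv, zero_smul]

end DerivSmulConst

-- Also for `a = 0`, where both sides vanish since `0⁻¹ = 0` for scalars and matrices.
theorem Matrix.inv_smul_mul_smul {n K : Type*} [Fintype n] [DecidableEq n] [Field K]
    {S : Matrix n n K} (hS : IsUnit S.det) (a b : K) :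
    (a • S)⁻¹ * (b • S) = (b / a) • (1 : Matrix n n K) := by
  rcases eq_or_ne a 0 with rfl | ha
  · simp
  · have hdet : IsUnit (a • S).det := by
      rw [det_smul]
      exact (pow_ne_zero _ ha).isUnit.mul hS
    rw [show b • S = (b / a) • (a • S) by rw [smul_smul, div_mul_cancel₀ _ ha], Matrix.mul_smul,
      nonsing_inv_mul _ hdet]

theorem rr_equation_iff_scalar_ode_general
    (n : ℕ) (hn : 1 ≤ n) (S : Matrix (Fin n) (Fin n) ℝ) (hS : IsUnit S.det)
    (f : ℝ → ℝ) (r₀ : ℝ) (hfne : f r₀ ≠ 0)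
    (M : ℝ → Matrix (Fin n) (Fin n) ℝ) (hM : ∀ r, M r = f r • S) :
    ((M r₀)⁻¹ * deriv (deriv M) r₀).trace =
        (1 / 2) * ((M r₀)⁻¹ * deriv M r₀ * ((M r₀)⁻¹ * deriv M r₀)).trace ↔
      2 * f r₀ * deriv (deriv f) r₀ = (deriv f r₀) ^ 2 := by
  have hS0 : S ≠ 0 := by
    rintro rfl
    have : Nonempty (Fin n) := ⟨⟨0, hn⟩⟩
    simp at hS
  have hM' : deriv M = fun r => deriv f r • S := by
    rw [funext hM]
    exact deriv_smul_const_of_ne_zero f hS0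
  have hM'' : deriv (deriv M) = fun r => deriv (deriv f) r • S := by
    rw [hM']
    exact deriv_smul_const_of_ne_zero _ hS0
  have hn0 : (n : ℝ) ≠ 0 := by positivity
  rw [hM'', hM', hM r₀]
  simp only [inv_smul_mul_smul hS, smul_mul_smul_comm, mul_one, trace_smul, trace_one,
    Fintype.card_fin, smul_eq_mul]
  field_simp

theorem rr_equation_iff_scalar_ode
    (n : ℕ) (hn : 1 ≤ n) (S : Matrix (Fin n) (Fin n) ℝ) (hS : IsUnit S.det)
    (f : ℝ → ℝ) (r₀ : ℝ) (hf : ContDiffAt ℝ 2 f r₀) (hfne : f r₀ ≠ 0)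
    (M : ℝ → Matrix (Fin n) (Fin n) ℝ) (hM : ∀ r, M r = f r • S) :
    ((M r₀)⁻¹ * deriv (deriv M) r₀).trace =
        (1 / 2) * ((M r₀)⁻¹ * deriv M r₀ * ((M r₀)⁻¹ * deriv M r₀)).trace ↔
      2 * f r₀ * deriv (deriv f) r₀ = (deriv f r₀) ^ 2 :=
  rr_equation_iff_scalar_ode_general n hn S hS f r₀ hfne M hM
end
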